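/- The chain rule for KL divergence: for joint distributions P and Q of a pair (X, Y) on a product of standard Borel spaces, KL(P_{X,Y} ‖ Q_{X,Y}) = KL(P_X ‖ Q_X) + E_{x ∼ P_X}[KL(P_{Y|X=x} ‖ Q_{Y|X=x})], where P_X, Q_X are the marginals of X and P_{Y|X}, Q_{Y|X} are regular conditional distributions. -/

import Mathlib

/-!
Disintegrate `P = P.fst ⊗ₘ P.condKernel` and `Q = Q.fst ⊗ₘ Q.condKernel`. Mathlib's chain rule
`InformationTheory.klDiv_compProd_eq_add` splits `KL(μ ⊗ₘ κ ‖ ν ⊗ₘ η)` into `KL(μ ‖ ν)` plus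
`KL(μ ⊗ₘ κ ‖ μ ⊗ₘ η)`. When `κ a ≪ η a` for `μ`-a.e. `a`, the density of `μ ⊗ₘ κ` with respect to
`μ ⊗ₘ η` is the kernel density `κ.rnDeriv η`, so writing KL as the f-divergence
`∫⁻ klFun (dμ/dν) dν` with a nonnegative integrand, Tonelli turns the second term into
`∫⁻ a, KL(κ a ‖ η a) ∂μ`; otherwise both sides are `∞`. Mathlib's `klDiv` carries the extra term
`ν.real univ - μ.real univ`, which vanishes for probability measures.
-/

open MeasureTheory ProbabilityTheory Real
open scoped ENNReal ProbabilityTheory Classical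

/-- Kullback-Leibler divergence, `+∞` if `P` is not absolutely continuous w.r.t. `Q`
or the log-likelihood ratio is not integrable. -/
noncomputable def klDiv {X : Type*} [MeasurableSpace X] (P Q : Measure X) : ℝ≥0∞ :=
  if P ≪ Q ∧ Integrable (llr P Q) P then ENNReal.ofReal (∫ x, llr P Q x ∂P) else ⊤

lemma klDiv_eq_informationTheory_klDiv {α : Type*} [MeasurableSpace α] {μ ν : Measure α}
    (h : μ.real Set.univ = ν.real Set.univ) : klDiv μ ν = InformationTheory.klDiv μ ν := by
  rw [klDiv, InformationTheory.klDiv_def, h, add_sub_cancel_right]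

namespace ProbabilityTheory

variable {α β : Type*} [MeasurableSpace α] [MeasurableSpace β]
  [MeasurableSpace.CountablyGenerated β] {μ : Measure α} {κ η : Kernel α β}
  [IsFiniteMeasure μ] [IsFiniteKernel κ] [IsFiniteKernel η]

lemma rnDeriv_measure_compProd_right (h_ac : ∀ᵐ a ∂μ, κ a ≪ η a) :
    (μ ⊗ₘ κ).rnDeriv (μ ⊗ₘ η) =ᵐ[μ ⊗ₘ η] fun p ↦ κ.rnDeriv η p.1 p.2 := by
  have hκ : κ =ᵐ[μ] η.withDensity (κ.rnDeriv η) := by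
    filter_upwards [h_ac] with a ha using (Kernel.withDensity_rnDeriv_eq ha).symm
  rw [Measure.compProd_congr hκ, Measure.compProd_withDensity (by fun_prop)]
  exact Measure.rnDeriv_withDensity _ (by fun_prop)

end ProbabilityTheory

namespace InformationTheory

open ProbabilityTheory

variable {α β : Type*} [MeasurableSpace α] [MeasurableSpace β]
  [MeasurableSpace.CountablyGenerated β] {μ : Measure α} {κ η : Kernel α β}
  [IsFiniteKernel κ] [IsFiniteKernel η]

lemma lintegral_klDiv_eq_top_of_not_ae_ac (h : ¬ ∀ᵐ a ∂μ, κ a ≪ η a) :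
    ∫⁻ a, klDiv (κ a) (η a) ∂μ = ∞ := by
  set s := {a | ¬ κ a ≪ η a}
  have hs : MeasurableSet s := (Kernel.measurableSet_absolutelyContinuous κ η).compl
  have hμs : μ s ≠ 0 := fun h0 ↦ h (ae_iff.mpr h0)
  refine eq_top_iff.mpr (le_trans ?_ (setLIntegral_le_lintegral s _))
  rw [setLIntegral_congr_fun hs fun a ha ↦ klDiv_of_not_ac ha, setLIntegral_const,
    ENNReal.top_mul hμs]

theorem klDiv_compProd_right [IsFiniteMeasure μ] :
    klDiv (μ ⊗ₘ κ) (μ ⊗ₘ η) = ∫⁻ a, klDiv (κ a) (η a) ∂μ := by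
  by_cases h_ac : ∀ᵐ a ∂μ, κ a ≪ η a
  swap
  · rw [lintegral_klDiv_eq_top_of_not_ae_ac h_ac,
      klDiv_of_not_ac (mt Measure.absolutelyContinuous_compProd_right_iff.mp h_ac)]
  rw [klDiv_eq_lintegral_klFun_of_ac (Measure.absolutelyContinuous_compProd_right_iff.mpr h_ac)]
  calc ∫⁻ p, .ofReal (klFun ((μ ⊗ₘ κ).rnDeriv (μ ⊗ₘ η) p).toReal) ∂(μ ⊗ₘ η)
  _ = ∫⁻ p, .ofReal (klFun (κ.rnDeriv η p.1 p.2).toReal) ∂(μ ⊗ₘ η) := by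
    refine lintegral_congr_ae ?_
    filter_upwards [rnDeriv_measure_compProd_right h_ac] with p hp
    rw [hp]
  _ = ∫⁻ a, ∫⁻ b, .ofReal (klFun (κ.rnDeriv η a b).toReal) ∂(η a) ∂μ :=
    Measure.lintegral_compProd (by fun_prop)
  _ = ∫⁻ a, klDiv (κ a) (η a) ∂μ := by
    refine lintegral_congr_ae ?_
    filter_upwards [h_ac] with a ha
    rw [klDiv_eq_lintegral_klFun_of_ac ha]
    refine lintegral_congr_ae ?_
    filter_upwards [Kernel.rnDeriv_eq_rnDeriv_measure (κ := κ) (η := η) (a := a)] with b hb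
    rw [hb]

end InformationTheory

theorem klDiv_chain_rule_general {X Y : Type*} [MeasurableSpace X]
    [MeasurableSpace Y] [StandardBorelSpace Y] [Nonempty Y]
    (P Q : Measure (X × Y)) [IsProbabilityMeasure P] [IsProbabilityMeasure Q] :
    klDiv P Q = klDiv P.fst Q.fst + ∫⁻ x, klDiv (P.condKernel x) (Q.condKernel x) ∂P.fst := by
  conv_lhs => rw [← P.disintegrate P.condKernel, ← Q.disintegrate Q.condKernel]
  simp (disch := simp) only [klDiv_eq_informationTheory_klDiv]
  rw [InformationTheory.klDiv_compProd_eq_add, InformationTheory.klDiv_compProd_right]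

/-- Chain rule for KL divergence: the KL divergence of the joint laws equals the KL
divergence of the first marginals plus the expected KL divergence of the
disintegrations (regular conditional distributions). -/
theorem klDiv_chain_rule {X Y : Type*} [MeasurableSpace X] [StandardBorelSpace X]
    [MeasurableSpace Y] [StandardBorelSpace Y] [Nonempty Y]
    (P Q : Measure (X × Y)) [IsProbabilityMeasure P] [IsProbabilityMeasure Q] :
    klDiv P Q = klDiv P.fst Q.fst + ∫⁻ x, klDiv (P.condKernel x) (Q.condKernel x) ∂P.fst :=
  klDiv_chain_rule_general P Q
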